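/- arXiv:2104.02788 — 6 statements merged into one kernel-verified Lean document; each statement's English description precedes it below -/
import Mathlib

section
/- Let T ≥ 1 be an integer and let X_safe ⊆ X_ws ⊆ ℝⁿ with ‖x‖ ≤ E for all x ∈ X_ws, where E ≥ 0. Let f : ℝⁿ → ℝⁿ be Lipschitz on X_ws with constant L_f ≥ 0, let g : ℝⁿ → L(ℝᵐ, ℝⁿ) be Lipschitz on X_ws with constant L_g ≥ 0 (operator norm), and let Ψ : ℝⁿ → ℝᵐ be Lipschitz on X_ws with constant Ω_W ≥ 0 and satisfy ‖Ψ(x)‖ ≤ Ω_W·E + Ω_b for all x ∈ X_ws, where Ω_b ≥ 0. Let β_max ≥ 0 and L_max ≥ 0 be reals such that (a) ‖f(x_0) − x_0‖ + ‖g(x_0)‖·(Ω_W·E + Ω_b) ≤ β_max for all x_0 ∈ X_safe, and (b) L_f + L_g·(Ω_W·E + Ω_b) + Ω_W·‖g(x)‖ ≤ L_max for all x ∈ X_ws. Let x_0 ∈ X_safe and let (ζ_i) be the closed-loop trajectory ζ_0 = x_0, ζ_{i+1} = f(ζ_i) + g(ζ_i)(Ψ(ζ_i)), and assume ζ_i ∈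 X_ws for all 0 ≤ i ≤ T. Then ‖ζ_T − x_0‖ ≤ β_max · Σ_{k=0}^{T} L_max^k. -/
/-- Proposition 1 of the paper: reach-set bound for the closed-loop
trajectory `ζ₀ = x₀`, `ζ_{i+1} = f(ζ_i) + g(ζ_i)(Ψ(ζ_i))` of a discrete-time
input-affine system under a Lipschitz feedback controller `Ψ`:
`‖ζ_T − x₀‖ ≤ β_max · Σ_{k=0}^{T} L_max^k`. -/
theorem reach_set_bound {n m : ℕ} (T : ℕ) (hT : 1 ≤ T)
    (Xsafe Xws : Set (EuclideanSpace ℝ (Fin n))) (hsub : Xsafe ⊆ Xws)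
    (E : ℝ) (hE : 0 ≤ E) (hws : ∀ x ∈ Xws, ‖x‖ ≤ E)
    (f : EuclideanSpace ℝ (Fin n) → EuclideanSpace ℝ (Fin n))
    (g : EuclideanSpace ℝ (Fin n) → (EuclideanSpace ℝ (Fin m) →L[ℝ] EuclideanSpace ℝ (Fin n)))
    (Ψ : EuclideanSpace ℝ (Fin n) → EuclideanSpace ℝ (Fin m))
    (Lf Lg ΩW Ωb : ℝ) (hLf : 0 ≤ Lf) (hLg : 0 ≤ Lg) (hΩW : 0 ≤ ΩW) (hΩb : 0 ≤ Ωb)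
    (hf : ∀ x ∈ Xws, ∀ y ∈ Xws, ‖f x - f y‖ ≤ Lf * ‖x - y‖)
    (hg : ∀ x ∈ Xws, ∀ y ∈ Xws, ‖g x - g y‖ ≤ Lg * ‖x - y‖)
    (hΨlip : ∀ x ∈ Xws, ∀ y ∈ Xws, ‖Ψ x - Ψ y‖ ≤ ΩW * ‖x - y‖)
    (hΨbd : ∀ x ∈ Xws, ‖Ψ x‖ ≤ ΩW * E + Ωb)
    (βmax Lmax : ℝ) (hβ : 0 ≤ βmax) (hLmax : 0 ≤ Lmax)
    (ha : ∀ x₀ ∈ Xsafe, ‖f x₀ - x₀‖ + ‖g x₀‖ * (ΩW * E + Ωb) ≤ βmax)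
    (hb : ∀ x ∈ Xws, Lf + Lg * (ΩW * E + Ωb) + ΩW * ‖g x‖ ≤ Lmax)
    (x₀ : EuclideanSpace ℝ (Fin n)) (hx₀ : x₀ ∈ Xsafe)
    (ζ : ℕ → EuclideanSpace ℝ (Fin n))
    (hζ0 : ζ 0 = x₀)
    (hζ : ∀ i, ζ (i + 1) = f (ζ i) + g (ζ i) (Ψ (ζ i)))
    (hconf : ∀ i ≤ T, ζ i ∈ Xws) :
    ‖ζ T - x₀‖ ≤ βmax * ∑ k ∈ Finset.range (T + 1), Lmax ^ k := by

  have hx₀w : x₀ ∈ Xws := hsub hx₀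
  have hB : (0:ℝ) ≤ ΩW * E + Ωb := by positivity
  -- one-step bound
  have key : ∀ i, i + 1 ≤ T → ‖ζ (i+1) - x₀‖ ≤ Lmax * ‖ζ i - x₀‖ + βmax := by
    intro i hi
    have hζiw : ζ i ∈ Xws := hconf i (by omega)
    set d := ‖ζ i - x₀‖ with hd
    have hd0 : 0 ≤ d := norm_nonneg _
    have hdecomp : ζ (i+1) - x₀ =
        (f (ζ i) - f x₀) + ((g (ζ i) - g x₀) (Ψ (ζ i)))
          + ((g x₀) (Ψ (ζ i) - Ψ x₀)) + ((f x₀ + (g x₀) (Ψ x₀)) - x₀) := by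
      rw [hζ i]
      simp only [ContinuousLinearMap.sub_apply, map_sub]
      abel
    have h1 : ‖f (ζ i) - f x₀‖ ≤ Lf * d := hf _ hζiw _ hx₀w
    have h2 : ‖(g (ζ i) - g x₀) (Ψ (ζ i))‖ ≤ (Lg * d) * (ΩW * E + Ωb) := by
      calc ‖(g (ζ i) - g x₀) (Ψ (ζ i))‖ ≤ ‖g (ζ i) - g x₀‖ * ‖Ψ (ζ i)‖ :=
            (g (ζ i) - g x₀).le_opNorm _
        _ ≤ (Lg * d) * (ΩW * E + Ωb) :=
            mul_le_mul (hg _ hζiw _ hx₀w) (hΨbd _ hζiw) (norm_nonneg _)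
              (by positivity)
    have h3 : ‖(g x₀) (Ψ (ζ i) - Ψ x₀)‖ ≤ ‖g x₀‖ * (ΩW * d) := by
      calc ‖(g x₀) (Ψ (ζ i) - Ψ x₀)‖ ≤ ‖g x₀‖ * ‖Ψ (ζ i) - Ψ x₀‖ :=
            (g x₀).le_opNorm _
        _ ≤ ‖g x₀‖ * (ΩW * d) :=
            mul_le_mul_of_nonneg_left (hΨlip _ hζiw _ hx₀w) (norm_nonneg _)
    have h4 : ‖(f x₀ + (g x₀) (Ψ x₀)) - x₀‖ ≤ βmax := by
      calc ‖(f x₀ + (g x₀) (Ψ x₀)) - x₀‖ = ‖(f x₀ - x₀) + (g x₀) (Ψ x₀)‖ := by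
            congr 1; abel
        _ ≤ ‖f x₀ - x₀‖ + ‖(g x₀) (Ψ x₀)‖ := norm_add_le _ _
        _ ≤ ‖f x₀ - x₀‖ + ‖g x₀‖ * (ΩW * E + Ωb) := by
            gcongr
            calc ‖(g x₀) (Ψ x₀)‖ ≤ ‖g x₀‖ * ‖Ψ x₀‖ := (g x₀).le_opNorm _
              _ ≤ ‖g x₀‖ * (ΩW * E + Ωb) :=
                  mul_le_mul_of_nonneg_left (hΨbd _ hx₀w) (norm_nonneg _)
        _ ≤ βmax := ha _ hx₀
    calc ‖ζ (i+1) - x₀‖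
        ≤ ‖(f (ζ i) - f x₀) + ((g (ζ i) - g x₀) (Ψ (ζ i)))
            + ((g x₀) (Ψ (ζ i) - Ψ x₀))‖ + ‖(f x₀ + (g x₀) (Ψ x₀)) - x₀‖ := by
          rw [hdecomp]; exact norm_add_le _ _
      _ ≤ (‖f (ζ i) - f x₀‖ + ‖(g (ζ i) - g x₀) (Ψ (ζ i))‖
            + ‖(g x₀) (Ψ (ζ i) - Ψ x₀)‖) + ‖(f x₀ + (g x₀) (Ψ x₀)) - x₀‖ := by
          gcongr; exact norm_add₃_le
      _ ≤ (Lf * d + (Lg * d) * (ΩW * E + Ωb) + ‖g x₀‖ * (ΩW * d)) + βmax := by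
          gcongr
      _ = (Lf + Lg * (ΩW * E + Ωb) + ΩW * ‖g x₀‖) * d + βmax := by ring
      _ ≤ Lmax * d + βmax := by
          gcongr
          exact hb _ hx₀w
  have main : ∀ i, i ≤ T → ‖ζ i - x₀‖ ≤ βmax * ∑ k ∈ Finset.range i, Lmax ^ k := by
    intro i
    induction i with
    | zero => intro _; simp [hζ0]
    | succ i ih =>
      intro hi
      have hrec := key i hi
      have hih := ih (by omega)
      calc ‖ζ (i+1) - x₀‖ ≤ Lmax * ‖ζ i - x₀‖ + βmax := hrec
        _ ≤ Lmax * (βmax * ∑ k ∈ Finset.range i, Lmax ^ k) + βmax := by gcongr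
        _ = βmax * ∑ k ∈ Finset.range (i+1), Lmax ^ k := by
            rw [geom_sum_succ]; ring
  calc ‖ζ T - x₀‖ ≤ βmax * ∑ k ∈ Finset.range T, Lmax ^ k := main T le_rfl
    _ ≤ βmax * ∑ k ∈ Finset.range (T+1), Lmax ^ k := by
        apply mul_le_mul_of_nonneg_left _ hβ
        apply Finset.sum_le_sum_of_subset_of_nonneg
          (Finset.range_subset_range.mpr (by omega))
        intro k _ _
        positivity
end

section
/- Let T ≥ 1 be an integer and let X_safe ⊆ X_ws ⊆ ℝⁿ with ‖x‖ ≤ E for all x ∈ X_ws, where E ≥ 0, and let X_unsafe ⊆ ℝⁿ. Let f : ℝⁿ → ℝⁿ be Lipschitz on X_ws with constant L_f ≥ 0, let g : ℝⁿ → L(ℝᵐ, ℝⁿ) be Lipschitz on X_ws with constant L_g ≥ 0 (operator norm), and let Ψ : ℝⁿ → ℝᵐ be Lipschitz on X_ws with constant Ω_W ≥ 0 and satisfy ‖Ψ(x)‖ ≤ Ω_W·E + Ω_b for all x ∈ X_ws, where Ω_b ≥ 0. Let β_max ≥ 0 and L_max ≥ 0 satisfy (a) ‖f(x_0) − x_0‖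 + ‖g(x_0)‖·(Ω_W·E + Ω_b) ≤ β_max for all x_0 ∈ X_safe and (b) L_f + L_g·(Ω_W·E + Ω_b) + Ω_W·‖g(x)‖ ≤ L_max for all x ∈ X_ws. Suppose further that for every δx ∈ ℝⁿ with ‖δx‖ ≤ β_max · Σ_{k=0}^{T} L_max^k and every x_0 ∈ X_safe, one has x_0 + δx ∉ X_unsafe. Then for every x_0 ∈ X_safe, the closed-loop trajectory ζ_0 = x_0, ζ_{i+1} = f(ζ_i) + g(ζ_i)(Ψ(ζ_i)), assumed to remain in X_ws for 0 ≤ i ≤ T, satisfies ζ_i ∉ X_unsafe for every i ∈ {1, …, T}. -/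
/-- Proposition 2 of the paper: if the reach-set constants
`β_max`, `L_max` satisfy the safety condition that no displacement of a safe state
by at most `β_max · Σ_{k=0}^{T} L_max^k` lands in the unsafe set, then every
closed-loop trajectory starting in `X_safe` avoids `X_unsafe` over the horizon `T`. -/
theorem reach_set_bound_safe {n m : ℕ} (T : ℕ) (hT : 1 ≤ T)
    (Xsafe Xws : Set (EuclideanSpace ℝ (Fin n))) (hsub : Xsafe ⊆ Xws)
    (Xunsafe : Set (EuclideanSpace ℝ (Fin n)))
    (E : ℝ) (hE : 0 ≤ E) (hws : ∀ x ∈ Xws, ‖x‖ ≤ E)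
    (f : EuclideanSpace ℝ (Fin n) → EuclideanSpace ℝ (Fin n))
    (g : EuclideanSpace ℝ (Fin n) → (EuclideanSpace ℝ (Fin m) →L[ℝ] EuclideanSpace ℝ (Fin n)))
    (Ψ : EuclideanSpace ℝ (Fin n) → EuclideanSpace ℝ (Fin m))
    (Lf Lg ΩW Ωb : ℝ) (hLf : 0 ≤ Lf) (hLg : 0 ≤ Lg) (hΩW : 0 ≤ ΩW) (hΩb : 0 ≤ Ωb)
    (hf : ∀ x ∈ Xws, ∀ y ∈ Xws, ‖f x - f y‖ ≤ Lf * ‖x - y‖)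
    (hg : ∀ x ∈ Xws, ∀ y ∈ Xws, ‖g x - g y‖ ≤ Lg * ‖x - y‖)
    (hΨlip : ∀ x ∈ Xws, ∀ y ∈ Xws, ‖Ψ x - Ψ y‖ ≤ ΩW * ‖x - y‖)
    (hΨbd : ∀ x ∈ Xws, ‖Ψ x‖ ≤ ΩW * E + Ωb)
    (βmax Lmax : ℝ) (hβ : 0 ≤ βmax) (hLmax : 0 ≤ Lmax)
    (ha : ∀ x₀ ∈ Xsafe, ‖f x₀ - x₀‖ + ‖g x₀‖ * (ΩW * E + Ωb) ≤ βmax)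
    (hb : ∀ x ∈ Xws, Lf + Lg * (ΩW * E + Ωb) + ΩW * ‖g x‖ ≤ Lmax)
    (hsafety : ∀ δx : EuclideanSpace ℝ (Fin n),
      ‖δx‖ ≤ βmax * ∑ k ∈ Finset.range (T + 1), Lmax ^ k →
        ∀ x₀ ∈ Xsafe, x₀ + δx ∉ Xunsafe)
    (x₀ : EuclideanSpace ℝ (Fin n)) (hx₀ : x₀ ∈ Xsafe)
    (ζ : ℕ → EuclideanSpace ℝ (Fin n))
    (hζ0 : ζ 0 = x₀)
    (hζ : ∀ i, ζ (i + 1) = f (ζ i) + g (ζ i) (Ψ (ζ i)))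
    (hconf : ∀ i ≤ T, ζ i ∈ Xws) :
    ∀ i, 1 ≤ i → i ≤ T → ζ i ∉ Xunsafe := by

  -- Step bound: ‖ζ (k+1) - ζ k‖ ≤ βmax * Lmax ^ k for k + 1 ≤ T
  have step : ∀ k, k + 1 ≤ T → ‖ζ (k + 1) - ζ k‖ ≤ βmax * Lmax ^ k := by
    intro k
    induction k with
    | zero =>
      intro _
      have hx₀ws : x₀ ∈ Xws := hsub hx₀
      have h1 : ζ 1 - ζ 0 = (f x₀ - x₀) + g x₀ (Ψ x₀) := by
        rw [hζ 0, hζ0]; abel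
      rw [h1]
      calc ‖(f x₀ - x₀) + g x₀ (Ψ x₀)‖
          ≤ ‖f x₀ - x₀‖ + ‖g x₀ (Ψ x₀)‖ := norm_add_le _ _
        _ ≤ ‖f x₀ - x₀‖ + ‖g x₀‖ * ‖Ψ x₀‖ :=
            add_le_add le_rfl ((g x₀).le_opNorm _)
        _ ≤ ‖f x₀ - x₀‖ + ‖g x₀‖ * (ΩW * E + Ωb) :=
            add_le_add le_rfl
              (mul_le_mul_of_nonneg_left (hΨbd _ hx₀ws) (norm_nonneg _))
        _ ≤ βmax := ha _ hx₀
        _ = βmax * Lmax ^ 0 := by ring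
    | succ k ih =>
      intro hk
      have hkT : k + 1 ≤ T := by omega
      have hx : ζ (k + 1) ∈ Xws := hconf _ hkT
      have hy : ζ k ∈ Xws := hconf _ (by omega)
      have ihd : ‖ζ (k + 1) - ζ k‖ ≤ βmax * Lmax ^ k := ih hkT
      set x := ζ (k + 1)
      set y := ζ k
      have hdecomp : ζ (k + 2) - ζ (k + 1)
          = (f x - f y) + ((g x - g y) (Ψ x) + (g y) (Ψ x - Ψ y)) := by
        have e1 : ζ (k + 2) = f x + g x (Ψ x) := hζ (k + 1)
        have e2 : ζ (k + 1) = f y + g y (Ψ y) := hζ k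
        rw [e1]
        conv_lhs => rw [e2]
        simp only [ContinuousLinearMap.sub_apply, map_sub]
        abel
      have hd0 : (0:ℝ) ≤ ‖x - y‖ := norm_nonneg _
      have key : ‖ζ (k + 2) - ζ (k + 1)‖ ≤ Lmax * ‖x - y‖ := by
        rw [hdecomp]
        calc ‖(f x - f y) + ((g x - g y) (Ψ x) + (g y) (Ψ x - Ψ y))‖
            ≤ ‖f x - f y‖ + (‖(g x - g y) (Ψ x)‖ + ‖(g y) (Ψ x - Ψ y)‖) :=
              (norm_add_le _ _).trans (add_le_add le_rfl (norm_add_le _ _))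
          _ ≤ Lf * ‖x - y‖ + (‖g x - g y‖ * ‖Ψ x‖ + ‖g y‖ * ‖Ψ x - Ψ y‖) :=
              add_le_add (hf _ hx _ hy)
                (add_le_add ((g x - g y).le_opNorm _) ((g y).le_opNorm _))
          _ ≤ Lf * ‖x - y‖ + ((Lg * ‖x - y‖) * (ΩW * E + Ωb)
                + ‖g y‖ * (ΩW * ‖x - y‖)) :=
              add_le_add le_rfl (add_le_add
                (mul_le_mul (hg _ hx _ hy) (hΨbd _ hx) (norm_nonneg _)
                  (by positivity))
                (mul_le_mul_of_nonneg_left (hΨlip _ hx _ hy) (norm_nonneg _)))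
          _ = (Lf + Lg * (ΩW * E + Ωb) + ΩW * ‖g y‖) * ‖x - y‖ := by ring
          _ ≤ Lmax * ‖x - y‖ := mul_le_mul_of_nonneg_right (hb _ hy) hd0
      calc ‖ζ (k + 2) - ζ (k + 1)‖ ≤ Lmax * ‖x - y‖ := key
        _ ≤ Lmax * (βmax * Lmax ^ k) := mul_le_mul_of_nonneg_left ihd hLmax
        _ = βmax * Lmax ^ (k + 1) := by ring
  intro i hi1 hiT
  have hdisp : ‖ζ i - x₀‖ ≤ βmax * ∑ k ∈ Finset.range (T + 1), Lmax ^ k := by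
    have htel : ζ i - x₀ = ∑ k ∈ Finset.range i, (ζ (k + 1) - ζ k) := by
      rw [Finset.sum_range_sub, hζ0]
    rw [htel]
    calc ‖∑ k ∈ Finset.range i, (ζ (k + 1) - ζ k)‖
        ≤ ∑ k ∈ Finset.range i, ‖ζ (k + 1) - ζ k‖ := norm_sum_le _ _
      _ ≤ ∑ k ∈ Finset.range i, βmax * Lmax ^ k := by
          refine Finset.sum_le_sum fun k hk => ?_
          exact step k (by simp at hk; omega)
      _ ≤ ∑ k ∈ Finset.range (T + 1), βmax * Lmax ^ k := by
          refine Finset.sum_le_sum_of_subset_of_nonneg ?_ fun k _ _ => ?_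
          · exact Finset.range_subset_range.2 (by omega)
          · positivity
      _ = βmax * ∑ k ∈ Finset.range (T + 1), Lmax ^ k := by
          rw [Finset.mul_sum]
  have := hsafety (ζ i - x₀) hdisp x₀ hx₀
  simpa using this
end

section
/- Let T ≥ 1 be an integer and let X_safe ⊆ X_ws ⊆ ℝⁿ with ‖x‖ ≤ E for all x ∈ X_ws, where E ≥ 0, and let X_unsafe ⊆ ℝⁿ. Let f : ℝⁿ → ℝⁿ be Lipschitz on X_ws with constant L_f ≥ 0 and let g : ℝⁿ → L(ℝᵐ, ℝⁿ) be Lipschitz on X_ws with constant L_g ≥ 0 (operator norm). Let the controller Ψ : ℝⁿ → ℝᵐ be of piecewise-affine selection form: there exist functions w : ℝⁿ → L(ℝⁿ, ℝᵐ) and b : ℝⁿ → ℝᵐ with Ψ(x) = w(x)(x) + b(x) for all x, with ‖w(x)‖ ≤ Ω_W and ‖b(x)‖ ≤ Ω_b for all x ∈ X_ws (Ω_W, Ω_b ≥ 0), and suppose Ψ is Lipschitz on X_ws with constant Ω_W. Let β_max ≥ 0 and L_max ≥ 0 satisfy (a) ‖f(x_0) − x_0‖ + ‖g(x_0)‖·(Ω_W·E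 + Ω_b) ≤ β_max for all x_0 ∈ X_safe, (b) L_f + L_g·(Ω_W·E + Ω_b) + Ω_W·‖g(x)‖ ≤ L_max for all x ∈ X_ws, and (c) for every δx ∈ ℝⁿ with ‖δx‖ ≤ β_max · Σ_{k=0}^{T} L_max^k and every x_0 ∈ X_safe, x_0 + δx ∉ X_unsafe. Then for every x_0 ∈ X_safe whose closed-loop trajectory ζ_0 = x_0, ζ_{i+1} = f(ζ_i) + g(ζ_i)(Ψ(ζ_i)) remains in X_ws for 0 ≤ i ≤ T, both (i) ‖ζ_T − x_0‖ ≤ β_max · Σ_{k=0}^{T} L_max^k and (ii) ζ_i ∉ X_unsafe for every i ∈ {1, …, T}. -/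
/-- Corollary on the repaired TLL controller: for a piecewise-affine
controller in selection form `Ψ(x) = w(x)(x) + b(x)` with all gains bounded by `Ω_W`
and offsets bounded by `Ω_b`, such that the constants `β_max`, `L_max` satisfy the
one-step bound, the Lipschitz bound, and the safety condition, every closed-loop
trajectory starting in `X_safe` satisfies the reach-set bound and avoids `X_unsafe`. -/
theorem repaired_tll_reach_set_bound {n m : ℕ} (T : ℕ) (hT : 1 ≤ T)
    (Xsafe Xws : Set (EuclideanSpace ℝ (Fin n))) (hsub : Xsafe ⊆ Xws)
    (Xunsafe : Set (EuclideanSpace ℝ (Fin n)))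
    (E : ℝ) (hE : 0 ≤ E) (hws : ∀ x ∈ Xws, ‖x‖ ≤ E)
    (f : EuclideanSpace ℝ (Fin n) → EuclideanSpace ℝ (Fin n))
    (g : EuclideanSpace ℝ (Fin n) → (EuclideanSpace ℝ (Fin m) →L[ℝ] EuclideanSpace ℝ (Fin n)))
    (Lf Lg ΩW Ωb : ℝ) (hLf : 0 ≤ Lf) (hLg : 0 ≤ Lg) (hΩW : 0 ≤ ΩW) (hΩb : 0 ≤ Ωb)
    (hf : ∀ x ∈ Xws, ∀ y ∈ Xws, ‖f x - f y‖ ≤ Lf * ‖x - y‖)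
    (hg : ∀ x ∈ Xws, ∀ y ∈ Xws, ‖g x - g y‖ ≤ Lg * ‖x - y‖)
    (Ψ : EuclideanSpace ℝ (Fin n) → EuclideanSpace ℝ (Fin m))
    (w : EuclideanSpace ℝ (Fin n) → (EuclideanSpace ℝ (Fin n) →L[ℝ] EuclideanSpace ℝ (Fin m)))
    (b : EuclideanSpace ℝ (Fin n) → EuclideanSpace ℝ (Fin m))
    (hΨ : ∀ x, Ψ x = w x x + b x)
    (hwbd : ∀ x ∈ Xws, ‖w x‖ ≤ ΩW)
    (hbbd : ∀ x ∈ Xws, ‖b x‖ ≤ Ωb)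
    (hΨlip : ∀ x ∈ Xws, ∀ y ∈ Xws, ‖Ψ x - Ψ y‖ ≤ ΩW * ‖x - y‖)
    (βmax Lmax : ℝ) (hβ : 0 ≤ βmax) (hLmax : 0 ≤ Lmax)
    (ha : ∀ x₀ ∈ Xsafe, ‖f x₀ - x₀‖ + ‖g x₀‖ * (ΩW * E + Ωb) ≤ βmax)
    (hb : ∀ x ∈ Xws, Lf + Lg * (ΩW * E + Ωb) + ΩW * ‖g x‖ ≤ Lmax)
    (hsafety : ∀ δx : EuclideanSpace ℝ (Fin n),
      ‖δx‖ ≤ βmax * ∑ k ∈ Finset.range (T + 1), Lmax ^ k →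
        ∀ x₀ ∈ Xsafe, x₀ + δx ∉ Xunsafe)
    (x₀ : EuclideanSpace ℝ (Fin n)) (hx₀ : x₀ ∈ Xsafe)
    (ζ : ℕ → EuclideanSpace ℝ (Fin n))
    (hζ0 : ζ 0 = x₀)
    (hζ : ∀ i, ζ (i + 1) = f (ζ i) + g (ζ i) (Ψ (ζ i)))
    (hconf : ∀ i ≤ T, ζ i ∈ Xws) :
    ‖ζ T - x₀‖ ≤ βmax * ∑ k ∈ Finset.range (T + 1), Lmax ^ k ∧
      ∀ i, 1 ≤ i → i ≤ T → ζ i ∉ Xunsafe := by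

  have hΨbd : ∀ x ∈ Xws, ‖Ψ x‖ ≤ ΩW * E + Ωb := by
    intro x hx
    rw [hΨ]
    calc ‖w x x + b x‖ ≤ ‖w x x‖ + ‖b x‖ := norm_add_le _ _
      _ ≤ ‖w x‖ * ‖x‖ + Ωb := add_le_add ((w x).le_opNorm x) (hbbd x hx)
      _ ≤ ΩW * E + Ωb := by
          have := mul_le_mul (hwbd x hx) (hws x hx) (norm_nonneg x) hΩW
          linarith
  have hstep : ∀ j, j + 1 ≤ T → ‖ζ (j+2) - ζ (j+1)‖ ≤ Lmax * ‖ζ (j+1) - ζ j‖ := by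
    intro j hj
    have hxj : ζ j ∈ Xws := hconf j (by omega)
    have hxj1 : ζ (j+1) ∈ Xws := hconf (j+1) hj
    have key : ζ (j+2) - ζ (j+1) = (f (ζ (j+1)) - f (ζ j)) +
        ((g (ζ (j+1)) - g (ζ j)) (Ψ (ζ (j+1))) + (g (ζ j)) (Ψ (ζ (j+1)) - Ψ (ζ j))) := by
      rw [show j + 2 = (j+1) + 1 from rfl, hζ (j+1), hζ j]
      simp only [ContinuousLinearMap.sub_apply, map_sub]
      abel
    have h1 : ‖f (ζ (j+1)) - f (ζ j)‖ ≤ Lf * ‖ζ (j+1) - ζ j‖ := hf _ hxj1 _ hxj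
    have h2 : ‖(g (ζ (j+1)) - g (ζ j)) (Ψ (ζ (j+1)))‖ ≤
        (Lg * ‖ζ (j+1) - ζ j‖) * (ΩW * E + Ωb) :=
      le_trans ((g (ζ (j+1)) - g (ζ j)).le_opNorm _)
        (mul_le_mul (hg _ hxj1 _ hxj) (hΨbd _ hxj1) (norm_nonneg _) (by positivity))
    have h3 : ‖(g (ζ j)) (Ψ (ζ (j+1)) - Ψ (ζ j))‖ ≤ ‖g (ζ j)‖ * (ΩW * ‖ζ (j+1) - ζ j‖) :=
      le_trans ((g (ζ j)).le_opNorm _)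
        (mul_le_mul_of_nonneg_left (hΨlip _ hxj1 _ hxj) (norm_nonneg _))
    have hb' := hb (ζ j) hxj
    have hd : (0:ℝ) ≤ ‖ζ (j+1) - ζ j‖ := norm_nonneg _
    have hgd : (0:ℝ) ≤ ‖g (ζ j)‖ := norm_nonneg _
    calc ‖ζ (j+2) - ζ (j+1)‖
        ≤ ‖f (ζ (j+1)) - f (ζ j)‖ +
          (‖(g (ζ (j+1)) - g (ζ j)) (Ψ (ζ (j+1)))‖ +
           ‖(g (ζ j)) (Ψ (ζ (j+1)) - Ψ (ζ j))‖) := by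
          rw [key]; exact le_trans (norm_add_le _ _) (by gcongr; exact norm_add_le _ _)
      _ ≤ Lmax * ‖ζ (j+1) - ζ j‖ := by nlinarith
  have hd : ∀ j, j < T → ‖ζ (j+1) - ζ j‖ ≤ βmax * Lmax ^ j := by
    intro j
    induction j with
    | zero =>
      intro _
      have hx0ws : ζ 0 ∈ Xws := hconf 0 (by omega)
      have key : ζ 1 - ζ 0 = (f (ζ 0) - ζ 0) + (g (ζ 0)) (Ψ (ζ 0)) := by
        rw [hζ 0]; abel
      have h2 : ‖(g (ζ 0)) (Ψ (ζ 0))‖ ≤ ‖g (ζ 0)‖ * (ΩW * E + Ωb) :=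
        le_trans ((g (ζ 0)).le_opNorm _)
          (mul_le_mul_of_nonneg_left (hΨbd _ hx0ws) (norm_nonneg _))
      have ha' := ha (ζ 0) (hζ0 ▸ hx₀)
      calc ‖ζ 1 - ζ 0‖ ≤ ‖f (ζ 0) - ζ 0‖ + ‖(g (ζ 0)) (Ψ (ζ 0))‖ := by
            rw [key]; exact norm_add_le _ _
        _ ≤ βmax := by linarith
        _ = βmax * Lmax ^ 0 := by ring
    | succ j ih =>
      intro hjT
      have h1 := hstep j (by omega)
      have h2 := ih (by omega)
      calc ‖ζ (j+2) - ζ (j+1)‖ ≤ Lmax * ‖ζ (j+1) - ζ j‖ := h1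
        _ ≤ Lmax * (βmax * Lmax ^ j) := mul_le_mul_of_nonneg_left h2 hLmax
        _ = βmax * Lmax ^ (j+1) := by ring
  have hsum : ∀ i, i ≤ T → ‖ζ i - x₀‖ ≤ βmax * ∑ k ∈ Finset.range i, Lmax ^ k := by
    intro i
    induction i with
    | zero => intro _; simp [hζ0]
    | succ i ih =>
      intro hiT
      have h1 := hd i (by omega)
      have h2 := ih (by omega)
      calc ‖ζ (i+1) - x₀‖ ≤ ‖ζ (i+1) - ζ i‖ + ‖ζ i - x₀‖ := norm_sub_le_norm_sub_add_norm_sub _ _ _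
        _ ≤ βmax * Lmax ^ i + βmax * ∑ k ∈ Finset.range i, Lmax ^ k := add_le_add h1 h2
        _ = βmax * ∑ k ∈ Finset.range (i+1), Lmax ^ k := by
            rw [Finset.sum_range_succ]; ring
  have hmono : ∀ i, i ≤ T → βmax * ∑ k ∈ Finset.range i, Lmax ^ k ≤
      βmax * ∑ k ∈ Finset.range (T+1), Lmax ^ k := by
    intro i hiT
    apply mul_le_mul_of_nonneg_left _ hβ
    apply Finset.sum_le_sum_of_subset_of_nonneg
    · exact Finset.range_subset_range.mpr (by omega)
    · intro k _ _; positivity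
  constructor
  · exact le_trans (hsum T le_rfl) (hmono T le_rfl)
  · intro i hi1 hiT
    have hbd : ‖ζ i - x₀‖ ≤ βmax * ∑ k ∈ Finset.range (T+1), Lmax ^ k :=
      le_trans (hsum i hiT) (hmono i hiT)
    have := hsafety (ζ i - x₀) hbd x₀ hx₀
    simpa using this
end

section
/- Fix positive integers N and M. For i ∈ {1,…,N}, let ℓ_i : ℝⁿ → ℝ be the affine function ℓ_i(x) = ⟨w_i, x⟩ + b_i with w_i ∈ ℝⁿ, b_i ∈ ℝ, and let s_1,…,s_M be nonempty subsets of {1,…,N} (selector sets). Let F : ℝⁿ → ℝ be the two-level-lattice (TLL) function F(x) = max_{1≤j≤M} min_{i∈s_j} ℓ_i(x). Suppose ℓ : ℝⁿ → ℝ is an affine function (ℓ(x) = ⟨w, x⟩ + c for some w ∈ ℝⁿ, c ∈ ℝ) and there exists a nonempty open set O ⊆ ℝⁿ such that F(x) = ℓ(x) for all x ∈ O. Then there exists an index i ∈ s_1 ∪ … ∪ s_M such that ℓ(x) = ℓ_i(x) for all x ∈ ℝⁿ (equivalently, w = w_i and c = b_i). -/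
open scoped RealInnerProductSpace

/-- The scalar Two-Level-Lattice (TLL) function
`F(x) = max_{1 ≤ j ≤ M} min_{i ∈ s_j} (⟨w_i, x⟩ + b_i)`. -/
noncomputable def TLL {n N M : ℕ} (hM : 0 < M)
    (w : Fin N → EuclideanSpace ℝ (Fin n)) (b : Fin N → ℝ)
    (s : Fin M → Finset (Fin N)) (hs : ∀ j, (s j).Nonempty)
    (x : EuclideanSpace ℝ (Fin n)) : ℝ :=
  Finset.univ.sup' ⟨⟨0, hM⟩, Finset.mem_univ _⟩
    fun j => (s j).inf' (hs j) fun i => ⟪w i, x⟫ + b i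

/-- If a nonempty open set is covered by finitely many closed sets, one of them
has nonempty interior. -/
lemma finite_closed_cover_interior {X ι : Type*} [TopologicalSpace X] [DecidableEq ι]
    (I : Finset ι) (A : ι → Set X) (hA : ∀ i, IsClosed (A i)) :
    ∀ O : Set X, IsOpen O → O.Nonempty → (∀ x ∈ O, ∃ i ∈ I, x ∈ A i) →
      ∃ i ∈ I, (interior (A i)).Nonempty := by
  induction I using Finset.induction_on with
  | empty =>
    intro O _ ⟨x, hx⟩ hcov
    obtain ⟨i, hi, _⟩ := hcov x hx
    exact absurd hi (Finset.notMem_empty i)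
  | insert _ _ ha ih =>
    rename_i a t
    intro O hO hne hcov
    by_cases h : (O \ A a).Nonempty
    · obtain ⟨i, hi, hint⟩ := ih (O \ A a) (hO.sdiff (hA a)) h (by
        intro x hx
        obtain ⟨i, hi, hxi⟩ := hcov x hx.1
        rcases Finset.mem_insert.mp hi with rfl | hit
        · exact absurd hxi hx.2
        · exact ⟨i, hit, hxi⟩)
      exact ⟨i, Finset.mem_insert_of_mem hi, hint⟩
    · have hsub : O ⊆ A a := by
        intro x hx
        by_contra hxa
        exact h ⟨x, hx, hxa⟩
      refine ⟨a, Finset.mem_insert_self a t, ?_⟩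
      obtain ⟨x, hx⟩ := hne
      exact ⟨x, interior_maximal hsub hO hx⟩

/-- If an affine function `⟪u, x⟫ + d` vanishes on a nonempty open set, then
`u = 0` and `d = 0`. -/
lemma affine_eq_zero_of_open {n : ℕ} (u : EuclideanSpace ℝ (Fin n)) (d : ℝ)
    (U : Set (EuclideanSpace ℝ (Fin n))) (hU : IsOpen U) (hne : U.Nonempty)
    (h : ∀ x ∈ U, ⟪u, x⟫ + d = 0) : u = 0 ∧ d = 0 := by
  obtain ⟨x0, hx0⟩ := hne
  obtain ⟨ε, hε, hball⟩ := Metric.isOpen_iff.mp hU x0 hx0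
  have hupos : (0:ℝ) < ‖u‖ + 1 := by positivity
  set t : ℝ := ε / (2 * (‖u‖ + 1)) with ht
  have htpos : 0 < t := by positivity
  have hmem : x0 + t • u ∈ U := by
    apply hball
    rw [Metric.mem_ball, dist_eq_norm]
    have : x0 + t • u - x0 = t • u := by abel
    rw [this, norm_smul, Real.norm_eq_abs, abs_of_pos htpos]
    calc t * ‖u‖ ≤ t * (‖u‖ + 1) := by nlinarith [norm_nonneg u]
      _ = ε / 2 := by rw [ht, div_mul_eq_mul_div, mul_div_mul_right _ _ hupos.ne']
      _ < ε := by linarith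
  have h1 := h x0 hx0
  have h2 := h _ hmem
  rw [inner_add_right, inner_smul_right] at h2
  have : t * ⟪u, u⟫ = 0 := by linarith
  have hu : u = 0 := by
    have : ⟪u, u⟫ = 0 := by
      rcases mul_eq_zero.mp this with h' | h'
      · exact absurd h' (ne_of_gt htpos)
      · exact h'
    exact inner_self_eq_zero.mp this
  subst hu
  simp at h1
  exact ⟨rfl, h1⟩

/-- Proposition 3 of [12]: every local linear function of a TLL
function — i.e. any affine function `ℓ(x) = ⟨wℓ, x⟩ + c` agreeing with the TLL
function on a nonempty open set — appears among the affine functions of its linear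
layer that are selected by some selector set. -/
theorem tll_local_linear_fn_in_linear_layer {n N M : ℕ} (hN : 0 < N) (hM : 0 < M)
    (w : Fin N → EuclideanSpace ℝ (Fin n)) (b : Fin N → ℝ)
    (s : Fin M → Finset (Fin N)) (hs : ∀ j, (s j).Nonempty)
    (wℓ : EuclideanSpace ℝ (Fin n)) (c : ℝ)
    (O : Set (EuclideanSpace ℝ (Fin n))) (hO : IsOpen O) (hOne : O.Nonempty)
    (hagree : ∀ x ∈ O, TLL hM w b s hs x = ⟪wℓ, x⟫ + c) :
    ∃ i ∈ Finset.univ.biUnion s,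
      (∀ x : EuclideanSpace ℝ (Fin n), ⟪wℓ, x⟫ + c = ⟪w i, x⟫ + b i) ∧
        wℓ = w i ∧ c = b i := by
  classical
  set A : Fin N → Set (EuclideanSpace ℝ (Fin n)) :=
    fun i => {x | ⟪wℓ, x⟫ + c = ⟪w i, x⟫ + b i} with hA
  have hAclosed : ∀ i, IsClosed (A i) := by
    intro i
    have : A i = (fun x => (⟪wℓ, x⟫ + c) - (⟪w i, x⟫ + b i)) ⁻¹' {0} := by
      ext x; simp [hA, sub_eq_zero]
    rw [this]
    have hcont : Continuous fun x : EuclideanSpace ℝ (Fin n) =>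
        (⟪wℓ, x⟫ + c) - (⟪w i, x⟫ + b i) :=
        (((continuous_const.inner continuous_id).add continuous_const).sub
          ((continuous_const.inner continuous_id).add continuous_const))
    exact IsClosed.preimage hcont isClosed_singleton
  have hcov : ∀ x ∈ O, ∃ i ∈ Finset.univ.biUnion s, x ∈ A i := by
    intro x hx
    have heq := hagree x hx
    unfold TLL at heq
    obtain ⟨j, _, hj⟩ := Finset.exists_mem_eq_sup' (⟨⟨0, hM⟩, Finset.mem_univ _⟩ :
      (Finset.univ : Finset (Fin M)).Nonempty)
      (fun j => (s j).inf' (hs j) fun i => ⟪w i, x⟫ + b i)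
    obtain ⟨i, hi, hi2⟩ := Finset.exists_mem_eq_inf' (hs j) (fun i => ⟪w i, x⟫ + b i)
    refine ⟨i, Finset.mem_biUnion.mpr ⟨j, Finset.mem_univ j, hi⟩, ?_⟩
    simp only [hA, Set.mem_setOf_eq]
    rw [← heq, hj, hi2]
  obtain ⟨i, hiI, hint⟩ := finite_closed_cover_interior (Finset.univ.biUnion s) A hAclosed
    O hO hOne hcov
  have hsub : interior (A i) ⊆ A i := interior_subset
  have : ∀ x ∈ interior (A i), ⟪wℓ - w i, x⟫ + (c - b i) = 0 := by
    intro x hx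
    have := hsub hx
    simp only [hA, Set.mem_setOf_eq] at this
    rw [inner_sub_left]
    linarith
  obtain ⟨hu, hd⟩ := affine_eq_zero_of_open (wℓ - w i) (c - b i) (interior (A i))
    isOpen_interior hint this
  have hw : wℓ = w i := by rwa [sub_eq_zero] at hu
  have hc : c = b i := by linarith
  exact ⟨i, hiI, fun x => by rw [hw, hc], hw, hc⟩
end

section
/- Fix positive integers N and M. For i ∈ {1,…,N}, let ℓ_i : ℝⁿ → ℝ be the affine function ℓ_i(x) = ⟨w_i, x⟩ + b_i with w_i ∈ ℝⁿ, b_i ∈ ℝ, and let s_1,…,s_M be nonempty subsets of {1,…,N} (selector sets). Let F : ℝⁿ → ℝ be the two-level-lattice (TLL) function F(x) = max_{1≤j≤M} min_{i∈s_j} ℓ_i(x). Then for every point x_c ∈ ℝⁿ there exist an index a ∈ s_1 ∪ … ∪ s_M and a closed, connected set R ⊆ ℝⁿ with nonempty interior such that x_c ∈ R and F(x) = ℓ_a(x) for all x ∈ R. -/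
open scoped RealInnerProductSpace

/-- The affine functions of the linear layer. -/
noncomputable def ellFn {n N : ℕ} (w : Fin N → EuclideanSpace ℝ (Fin n)) (b : Fin N → ℝ)
    (i : Fin N) (x : EuclideanSpace ℝ (Fin n)) : ℝ := ⟪w i, x⟫ + b i

lemma TLL_eq {n N M : ℕ} (hM : 0 < M)
    (w : Fin N → EuclideanSpace ℝ (Fin n)) (b : Fin N → ℝ)
    (s : Fin M → Finset (Fin N)) (hs : ∀ j, (s j).Nonempty)
    (x : EuclideanSpace ℝ (Fin n)) :
    TLL hM w b s hs x = Finset.univ.sup' ⟨⟨0, hM⟩, Finset.mem_univ _⟩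
      (fun j => (s j).inf' (hs j) fun i => ellFn w b i x) := rfl

lemma dense_ne_inner {n : ℕ} (u : EuclideanSpace ℝ (Fin n)) (hu : u ≠ 0) :
    Dense {v : EuclideanSpace ℝ (Fin n) | ⟪u, v⟫ ≠ 0} := by
  have h1 : {v : EuclideanSpace ℝ (Fin n) | ⟪u, v⟫ ≠ 0} = (LinearMap.ker ((innerSL ℝ u).toLinearMap) : Set _)ᶜ := by
    ext v; simp
  rw [h1, ← interior_eq_empty_iff_dense_compl]
  by_contra h
  have := (LinearMap.ker ((innerSL ℝ u).toLinearMap)).eq_top_of_nonempty_interior'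
    (Set.nonempty_iff_ne_empty.2 h)
  have hu2 : ⟪u, u⟫ = 0 := by
    have : u ∈ LinearMap.ker ((innerSL ℝ u).toLinearMap) := this ▸ Submodule.mem_top
    simpa using this
  exact hu (by simpa using (inner_self_eq_zero (𝕜 := ℝ)).1 hu2)

lemma exists_generic {n N : ℕ} (w : Fin N → EuclideanSpace ℝ (Fin n)) :
    ∃ v : EuclideanSpace ℝ (Fin n), ∀ i i' : Fin N, w i ≠ w i' → ⟪w i - w i', v⟫ ≠ 0 := by
  have hd : Dense (⋂ p : Fin N × Fin N,
      {v : EuclideanSpace ℝ (Fin n) | w p.1 ≠ w p.2 → ⟪w p.1 - w p.2, v⟫ ≠ 0}) := by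
    apply dense_iInter_of_isOpen
    · intro p
      by_cases h : w p.1 = w p.2
      · simp [h]
      · have hc : Continuous fun v : EuclideanSpace ℝ (Fin n) => ⟪w p.1 - w p.2, v⟫ :=
          (innerSL ℝ (w p.1 - w p.2)).continuous
        have : {v : EuclideanSpace ℝ (Fin n) | w p.1 ≠ w p.2 → ⟪w p.1 - w p.2, v⟫ ≠ 0} =
            (fun v : EuclideanSpace ℝ (Fin n) => ⟪w p.1 - w p.2, v⟫) ⁻¹' {(0:ℝ)}ᶜ := by
          ext v; simp [h]
        rw [this]
        exact (isOpen_compl_singleton).preimage hc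
    · intro p
      by_cases h : w p.1 = w p.2
      · simp [h]
      · have := dense_ne_inner (w p.1 - w p.2) (sub_ne_zero.2 h)
        refine this.mono ?_
        intro v hv _; exact hv
  obtain ⟨v, hv⟩ := hd.nonempty
  exact ⟨v, fun i i' h => Set.mem_iInter.1 hv (i, i') h⟩

lemma exists_pos_forall_le {α : Type*} [DecidableEq α] (Q : Finset α) (f : α → ℝ)
    (hf : ∀ p ∈ Q, 0 < f p) : ∃ ε : ℝ, 0 < ε ∧ ∀ p ∈ Q, ε ≤ f p := by
  classical
  have hne : (insert (1:ℝ) (Q.image f)).Nonempty := ⟨1, Finset.mem_insert_self _ _⟩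
  refine ⟨min 1 ((insert (1:ℝ) (Q.image f)).min' hne), ?_, ?_⟩
  · have hmem := (insert (1:ℝ) (Q.image f)).min'_mem hne
    rcases Finset.mem_insert.1 hmem with h | h
    · rw [h]; norm_num
    · obtain ⟨p, hp, hfp⟩ := Finset.mem_image.1 h
      have := hf p hp
      rw [hfp] at this
      exact lt_min one_pos this
  · intro p hp
    exact le_trans (min_le_right _ _)
      (Finset.min'_le _ _ (Finset.mem_insert_of_mem (Finset.mem_image_of_mem f hp)))

/-- Corollary 1 of the paper, scalar case: at every point `x_c`
there is an affine function `ℓ_a` of the linear layer (with `a` in some selector set)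
and a closed, connected activation region `R` with nonempty interior containing `x_c`
on which the TLL function equals `ℓ_a`. -/
theorem tll_active_local_linear_fn {n N M : ℕ} (hN : 0 < N) (hM : 0 < M)
    (w : Fin N → EuclideanSpace ℝ (Fin n)) (b : Fin N → ℝ)
    (s : Fin M → Finset (Fin N)) (hs : ∀ j, (s j).Nonempty)
    (xc : EuclideanSpace ℝ (Fin n)) :
    ∃ a ∈ Finset.univ.biUnion s, ∃ R : Set (EuclideanSpace ℝ (Fin n)),
      IsClosed R ∧ IsConnected R ∧ (interior R).Nonempty ∧ xc ∈ R ∧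
        ∀ x ∈ R, TLL hM w b s hs x = ⟪w a, x⟫ + b a := by
  classical
  obtain ⟨v, hv⟩ := exists_generic w
  set ℓ : Fin N → EuclideanSpace ℝ (Fin n) → ℝ := ellFn w b with hℓdef
  -- choice of the step size t along direction v
  obtain ⟨t, ht0, htle⟩ := exists_pos_forall_le
    (Finset.univ.filter (fun p : Fin N × Fin N => w p.1 ≠ w p.2 ∧ ℓ p.1 xc - ℓ p.2 xc ≠ 0))
    (fun p => |ℓ p.1 xc - ℓ p.2 xc| / (3 * |⟪w p.1 - w p.2, v⟫|)) (by
      intro p hp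
      obtain ⟨hw, hc⟩ := (Finset.mem_filter.1 hp).2
      have hm := abs_pos.2 (hv p.1 p.2 hw)
      have hcp := abs_pos.2 hc
      positivity)
  -- choice of the radius ρ
  obtain ⟨ρ, hρ0, hρle⟩ := exists_pos_forall_le
    (Finset.univ.filter (fun p : Fin N × Fin N => w p.1 ≠ w p.2))
    (fun p => t * |⟪w p.1 - w p.2, v⟫| / (2 * ‖w p.1 - w p.2‖)) (by
      intro p hp
      have hw := (Finset.mem_filter.1 hp).2
      have hm := abs_pos.2 (hv p.1 p.2 hw)
      have : (0:ℝ) < ‖w p.1 - w p.2‖ := norm_pos_iff.2 (sub_ne_zero.2 hw)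
      positivity)
  have hQ' : ∀ i i', w i ≠ w i' → ℓ i xc - ℓ i' xc ≠ 0 →
      3 * (t * |⟪w i - w i', v⟫|) ≤ |ℓ i xc - ℓ i' xc| := by
    intro i i' hw hc
    have hp := htle (i, i') (Finset.mem_filter.2 ⟨Finset.mem_univ _, hw, hc⟩)
    have hm : (0:ℝ) < |⟪w i - w i', v⟫| := abs_pos.2 (hv i i' hw)
    rw [le_div_iff₀ (by positivity)] at hp
    linarith
  have hP' : ∀ i i', w i ≠ w i' → 2 * (‖w i - w i'‖ * ρ) ≤ t * |⟪w i - w i', v⟫| := by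
    intro i i' hw
    have hp := hρle (i, i') (Finset.mem_filter.2 ⟨Finset.mem_univ _, hw⟩)
    have hn : (0:ℝ) < ‖w i - w i'‖ := norm_pos_iff.2 (sub_ne_zero.2 hw)
    rw [le_div_iff₀ (by positivity)] at hp
    linarith
  -- decomposition of the affine functions along the cone
  have hdecomp : ∀ (i i' : Fin N) (τ : ℝ) (u : EuclideanSpace ℝ (Fin n)),
      ℓ i (xc + τ • u) - ℓ i' (xc + τ • u)
        = (ℓ i xc - ℓ i' xc) + τ * ⟪w i - w i', u⟫ := by
    intro i i' τ u
    simp only [hℓdef, ellFn, inner_add_right, real_inner_smul_right, inner_sub_left]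
    ring
  -- the key order-transfer property
  have key : ∀ i i' : Fin N,
      ℓ i (xc + (1:ℝ) • (t • v)) ≤ ℓ i' (xc + (1:ℝ) • (t • v)) →
      ∀ τ ∈ Set.Icc (0:ℝ) 1, ∀ u ∈ Metric.closedBall (t • v) ρ,
        ℓ i (xc + τ • u) ≤ ℓ i' (xc + τ • u) := by
    intro i i' hy τ hτ u hu
    rw [← sub_nonpos, hdecomp] at hy ⊢
    obtain ⟨hτ0, hτ1⟩ := hτ
    by_cases hw : w i = w i'
    · rw [hw, sub_self] at hy ⊢
      simpa using hy
    · have hm0 : ⟪w i - w i', v⟫ ≠ 0 := hv i i' hw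
      set c := ℓ i xc - ℓ i' xc with hc
      set m := (⟪w i - w i', v⟫ : ℝ) with hmm
      set e := (⟪w i - w i', u⟫ : ℝ) with hee
      have hy' : c + t * m ≤ 0 := by
        have h1 : (⟪w i - w i', t • v⟫ : ℝ) = t * m := real_inner_smul_right _ _ _
        rw [h1] at hy; linarith
      have hCS : |e - t * m| ≤ ‖w i - w i'‖ * ρ := by
        have h1 : e - t * m = ⟪w i - w i', u - t • v⟫ := by
          rw [inner_sub_right, real_inner_smul_right]
        rw [h1]
        calc |(⟪w i - w i', u - t • v⟫ : ℝ)| ≤ ‖w i - w i'‖ * ‖u - t • v‖ :=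
              abs_real_inner_le_norm _ _
          _ ≤ ‖w i - w i'‖ * ρ := by
              apply mul_le_mul_of_nonneg_left _ (norm_nonneg _)
              rw [← dist_eq_norm]
              exact Metric.mem_closedBall.1 hu
      have hP2 := hP' i i' hw
      obtain ⟨hCS1, hCS2⟩ := abs_le.1 hCS
      have habs : |t * m| = t * |m| := by rw [abs_mul, abs_of_pos ht0]
      have hb1 : t * m ≤ t * |m| := habs ▸ le_abs_self _
      have hb2 : -(t * |m|) ≤ t * m := habs ▸ neg_abs_le _
      by_cases hcz : c = 0
      · -- then t*m ≤ 0
        have htm : t * m ≤ 0 := by linarith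
        have hA : t * |m| = -(t * m) := by rw [← habs, abs_of_nonpos htm]
        have he : e ≤ 0 := by linarith
        have : τ * e ≤ 0 := mul_nonpos_of_nonneg_of_nonpos hτ0 he
        linarith [this, hcz.le]
      · have hQ2 := hQ' i i' hw hcz
        have hcneg : c < 0 := by
          rcases lt_trichotomy c 0 with h | h | h
          · exact h
          · exact absurd h hcz
          · exfalso
            have hcabs : |c| = c := abs_of_pos h
            rw [hcabs] at hQ2
            linarith
        have hcabs : |c| = -c := abs_of_neg hcneg
        rw [hcabs] at hQ2
        have heub : e ≤ -c / 2 := by linarith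
        have hτe : τ * e ≤ -c / 2 := by
          rcases le_or_gt 0 e with h | h
          · have h4 : τ * e ≤ e := mul_le_of_le_one_left h hτ1
            linarith
          · have h4 : τ * e ≤ 0 := mul_nonpos_of_nonneg_of_nonpos hτ0 h.le
            linarith
        linarith
  -- the region
  set K : Set (ℝ × EuclideanSpace ℝ (Fin n)) :=
    Set.Icc (0:ℝ) 1 ×ˢ Metric.closedBall (t • v) ρ with hK
  have hcont : Continuous (fun q : ℝ × EuclideanSpace ℝ (Fin n) => xc + q.1 • q.2) :=
    continuous_const.add (continuous_fst.smul continuous_snd)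
  set R : Set (EuclideanSpace ℝ (Fin n)) :=
    (fun q : ℝ × EuclideanSpace ℝ (Fin n) => xc + q.1 • q.2) '' K with hR
  have hKcomp : IsCompact K := isCompact_Icc.prod (isCompact_closedBall _ _)
  have hKconn : IsConnected K := by
    refine ((convex_Icc (0:ℝ) 1).prod (convex_closedBall _ _)).isConnected ?_
    exact ⟨(0, t • v), ⟨le_refl 0, zero_le_one⟩, Metric.mem_closedBall_self hρ0.le⟩
  -- select the active index
  obtain ⟨jstar, _, hjstar⟩ := Finset.exists_mem_eq_sup'
    (⟨⟨0, hM⟩, Finset.mem_univ _⟩ : (Finset.univ : Finset (Fin M)).Nonempty)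
    (fun j => (s j).inf' (hs j) fun i => ℓ i (xc + (1:ℝ) • (t • v)))
  obtain ⟨a, ha, hay⟩ := Finset.exists_mem_eq_inf' (hs jstar)
    (fun i => ℓ i (xc + (1:ℝ) • (t • v)))
  refine ⟨a, Finset.mem_biUnion.2 ⟨jstar, Finset.mem_univ _, ha⟩, R, ?_, ?_, ?_, ?_, ?_⟩
  · exact (hKcomp.image hcont).isClosed
  · exact hKconn.image _ hcont.continuousOn
  · -- nonempty interior
    refine ⟨xc + (1:ℝ) • (t • v), ?_⟩
    rw [mem_interior]
    refine ⟨Metric.ball (xc + (1:ℝ) • (t • v)) ρ, ?_, Metric.isOpen_ball,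
      Metric.mem_ball_self hρ0⟩
    intro z hz
    refine ⟨(1, z - xc), ⟨⟨zero_le_one, le_refl 1⟩, ?_⟩, by simp⟩
    rw [Metric.mem_closedBall, dist_eq_norm]
    have h1 : z - xc - t • v = z - (xc + (1:ℝ) • (t • v)) := by
      rw [one_smul]; abel
    rw [h1, ← dist_eq_norm]
    exact (Metric.mem_ball.1 hz).le
  · exact ⟨(0, t • v), ⟨⟨le_refl 0, zero_le_one⟩, Metric.mem_closedBall_self hρ0.le⟩,
      by simp⟩
  · rintro x ⟨⟨τ, u⟩, ⟨hτ, hu⟩, rfl⟩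
    have goal_eq : TLL hM w b s hs (xc + τ • u) = ℓ a (xc + τ • u) := by
      rw [TLL_eq]
      apply le_antisymm
      · apply Finset.sup'_le
        intro j _
        obtain ⟨ij, hij, hijy⟩ := Finset.exists_mem_eq_inf' (hs j)
          (fun i => ℓ i (xc + (1:ℝ) • (t • v)))
        have h2 : ℓ ij (xc + (1:ℝ) • (t • v)) ≤ ℓ a (xc + (1:ℝ) • (t • v)) := by
          rw [← hijy, ← hay, ← hjstar]
          exact Finset.le_sup' (f := fun j => (s j).inf' (hs j)
            fun i => ℓ i (xc + (1:ℝ) • (t • v))) (Finset.mem_univ j)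
        calc (s j).inf' (hs j) (fun i => ellFn w b i (xc + τ • u))
            ≤ ℓ ij (xc + τ • u) := Finset.inf'_le _ hij
          _ ≤ ℓ a (xc + τ • u) := key ij a h2 τ hτ u hu
      · have h3 : ℓ a (xc + τ • u) ≤ (s jstar).inf' (hs jstar)
            (fun i => ellFn w b i (xc + τ • u)) := by
          apply Finset.le_inf'
          intro i hi
          apply key a i _ τ hτ u hu
          rw [← hay]
          exact Finset.inf'_le _ hi
        exact h3.trans (Finset.le_sup' (f := fun j => (s j).inf' (hs j)
          fun i => ellFn w b i (xc + τ • u)) (Finset.mem_univ jstar))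
    exact goal_eq
end

section
/- Fix positive integers N, M, m. For each output κ ∈ {1,…,m} and each i ∈ {1,…,N}, let ℓ_i^κ : ℝⁿ → ℝ be the affine function ℓ_i^κ(x) = ⟨w_i^κ, x⟩ + b_i^κ, and let s_1^κ,…,s_M^κ be nonempty subsets of {1,…,N}. Let F : ℝⁿ → ℝᵐ be the multi-output two-level-lattice function whose κ-th component is F_κ(x) = max_{1≤j≤M} min_{i∈s_j^κ} ℓ_i^κ(x). Then for every point x_c ∈ ℝⁿ there exist indices a_1,…,a_m with a_κ ∈ s_1^κ ∪ … ∪ s_M^κ for each κ, and a closed, connected set R ⊆ ℝⁿ with nonempty interior, such that x_c ∈ R and, for every κ ∈ {1,…,m} and every x ∈ R, F_κ(x) = ℓ_{a_κ}^κ(x). -/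
open scoped RealInnerProductSpace

/-- A generic direction: not orthogonal to any of finitely many nonzero vectors. -/
lemma exists_generic_direction {ι : Type*} [Finite ι] {E' : Type*} [NormedAddCommGroup E']
    [InnerProductSpace ℝ E'] (u : ι → E') :
    ∃ v : E', ∀ p, u p ≠ 0 → ⟪u p, v⟫ ≠ 0 := by
  classical
  by_cases htriv : ∀ p, u p = 0
  · exact ⟨0, fun p hp => absurd (htriv p) hp⟩
  push_neg at htriv
  obtain ⟨q, hq⟩ := htriv
  set K : ι → Subspace ℝ E' := fun p =>
    if u p = 0 then ⊥ else LinearMap.ker (innerSL ℝ (u p) : E' →ₗ[ℝ] ℝ) with hK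
  have hcover : (⋃ p, (K p : Set E')) ≠ Set.univ := by
    intro hcov
    obtain ⟨p, hp⟩ := Subspace.exists_eq_top_of_iUnion_eq_univ hcov
    have hp' : (if u p = 0 then (⊥ : Subspace ℝ E') else LinearMap.ker (innerSL ℝ (u p) : E' →ₗ[ℝ] ℝ)) = ⊤ := hp
    by_cases hup : u p = 0
    · have hbot : (⊥ : Subspace ℝ E') = ⊤ := by rwa [if_pos hup] at hp'
      have : u q ∈ (⊥ : Subspace ℝ E') := hbot ▸ Submodule.mem_top
      exact hq (by simpa using this)
    · have hker : LinearMap.ker (innerSL ℝ (u p) : E' →ₗ[ℝ] ℝ) = ⊤ := by rwa [if_neg hup] at hp'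
      have : u p ∈ LinearMap.ker (innerSL ℝ (u p) : E' →ₗ[ℝ] ℝ) := hker ▸ Submodule.mem_top
      have h0 : ⟪u p, u p⟫ = (0 : ℝ) := by simpa using this
      exact hup (inner_self_eq_zero.mp h0)
  have : ∃ v, v ∉ ⋃ p, (K p : Set E') := by
    by_contra h
    push_neg at h
    exact hcover (Set.eq_univ_of_forall h)
  obtain ⟨v, hv⟩ := this
  refine ⟨v, fun p hp hinner => ?_⟩
  apply hv
  refine Set.mem_iUnion.2 ⟨p, ?_⟩
  show v ∈ K p
  rw [hK]
  simp only [if_neg hp]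
  exact LinearMap.mem_ker.2 (by simpa using hinner)

/-- Corollary 1 of the paper, multi-output case: at every point
`x_c` there are, for each output `κ`, an affine function `ℓ_{a_κ}^κ` of the κ-th
linear layer (with `a_κ` in some selector set of output `κ`) and a common closed,
connected activation region `R` with nonempty interior containing `x_c`, on which
every component of the multi-output TLL function equals its selected affine function. -/
theorem multi_tll_active_local_linear_fn {n N M m : ℕ}
    (hN : 0 < N) (hM : 0 < M) (hm : 0 < m)
    (w : Fin m → Fin N → EuclideanSpace ℝ (Fin n)) (b : Fin m → Fin N → ℝ)
    (s : Fin m → Fin M → Finset (Fin N)) (hs : ∀ κ j, (s κ j).Nonempty)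
    (xc : EuclideanSpace ℝ (Fin n)) :
    ∃ a : Fin m → Fin N,
      (∀ κ, a κ ∈ Finset.univ.biUnion (s κ)) ∧
        ∃ R : Set (EuclideanSpace ℝ (Fin n)),
          IsClosed R ∧ IsConnected R ∧ (interior R).Nonempty ∧ xc ∈ R ∧
            ∀ κ, ∀ x ∈ R,
              TLL hM (w κ) (b κ) (s κ) (hs κ) x = ⟪w κ (a κ), x⟫ + b κ (a κ) := by
  classical
  let E := EuclideanSpace ℝ (Fin n)
  set L : Fin m → Fin N → E → ℝ := fun κ i x => ⟪w κ i, x⟫ + b κ i with hL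
  obtain ⟨v, hv⟩ := exists_generic_direction
    (fun p : Fin m × Fin N × Fin N => w p.1 p.2.1 - w p.1 p.2.2)
  have hexp : ∀ κ i (t : ℝ), L κ i (xc + t • v) = L κ i xc + t * ⟪w κ i, v⟫ := by
    intro κ i t
    simp only [hL, inner_add_right, inner_smul_right]
    ring
  have hcont : ∀ κ i, Continuous (L κ i) := fun κ i =>
    (continuous_const.inner continuous_id).add continuous_const
  -- key eventual statement along the segment xc + t • v
  have key : ∀ κ i i', ∀ᶠ t in nhdsWithin (0:ℝ) (Set.Ioi 0),
      ((L κ i (xc + t • v) = L κ i' (xc + t • v)) → ∀ x, L κ i x = L κ i' x) ∧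
      (L κ i (xc + t • v) < L κ i' (xc + t • v) → L κ i xc ≤ L κ i' xc) := by
    intro κ i i'
    have hcontt : ∀ (j : Fin N), Continuous fun t : ℝ => L κ j (xc + t • v) := by
      intro j
      have : (fun t : ℝ => L κ j (xc + t • v)) = fun t => L κ j xc + t * ⟪w κ j, v⟫ := by
        funext t; exact hexp κ j t
      rw [this]
      fun_prop
    rcases lt_trichotomy (L κ i xc) (L κ i' xc) with h | h | h
    · have htend : ∀ (j : Fin N), Filter.Tendsto (fun t : ℝ => L κ j (xc + t • v))
          (nhdsWithin (0:ℝ) (Set.Ioi 0)) (nhds (L κ j xc)) := by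
        intro j
        have h0 : Filter.Tendsto (fun t : ℝ => L κ j (xc + t • v))
            (nhdsWithin (0:ℝ) (Set.Ioi 0)) (nhds (L κ j (xc + (0:ℝ) • v))) :=
          ((hcontt j).tendsto 0).mono_left nhdsWithin_le_nhds
        simpa using h0
      have hev := (htend i).eventually_lt (htend i') h
      filter_upwards [hev] with t ht
      exact ⟨fun heq => absurd heq (ne_of_lt ht), fun _ => h.le⟩
    · by_cases hw : w κ i - w κ i' = 0
      · have hwe : ∀ x : E, ⟪w κ i, x⟫ = ⟪w κ i', x⟫ := by
          intro x
          have : ⟪w κ i - w κ i', x⟫ = (0:ℝ) := by rw [hw, inner_zero_left]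
          rw [inner_sub_left] at this
          linarith
        have hball : ∀ x : E, L κ i x = L κ i' x := by
          intro x
          have h1 := hwe xc
          have h2 := hwe x
          simp only [hL] at h ⊢
          linarith
        exact Filter.Eventually.of_forall fun t => ⟨fun _ => hball, fun _ => h.le⟩
      · have hd : ⟪w κ i - w κ i', v⟫ ≠ (0:ℝ) := hv (κ, i, i') hw
        filter_upwards [self_mem_nhdsWithin] with t ht
        refine ⟨fun heq => ?_, fun _ => h.le⟩
        exfalso
        rw [hexp, hexp] at heq
        have ht0 : (0:ℝ) < t := ht
        apply hd
        rw [inner_sub_left]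
        have : t * ⟪w κ i, v⟫ = t * ⟪w κ i', v⟫ := by linarith
        have := mul_left_cancel₀ (ne_of_gt ht0) this
        linarith
    · have htend : ∀ (j : Fin N), Filter.Tendsto (fun t : ℝ => L κ j (xc + t • v))
          (nhdsWithin (0:ℝ) (Set.Ioi 0)) (nhds (L κ j xc)) := by
        intro j
        have h0 : Filter.Tendsto (fun t : ℝ => L κ j (xc + t • v))
            (nhdsWithin (0:ℝ) (Set.Ioi 0)) (nhds (L κ j (xc + (0:ℝ) • v))) :=
          ((hcontt j).tendsto 0).mono_left nhdsWithin_le_nhds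
        simpa using h0
      have hev := (htend i').eventually_lt (htend i) h
      filter_upwards [hev] with t ht
      exact ⟨fun heq => absurd heq.symm (ne_of_lt ht), fun hlt => absurd ht (asymm hlt)⟩
  have hall : ∀ᶠ t in nhdsWithin (0:ℝ) (Set.Ioi 0), ∀ κ i i',
      ((L κ i (xc + t • v) = L κ i' (xc + t • v)) → ∀ x, L κ i x = L κ i' x) ∧
      (L κ i (xc + t • v) < L κ i' (xc + t • v) → L κ i xc ≤ L κ i' xc) :=
    Filter.eventually_all.2 fun κ => Filter.eventually_all.2 fun i =>
      Filter.eventually_all.2 fun i' => key κ i i'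
  obtain ⟨t, ht⟩ := hall.exists
  set y : E := xc + t • v with hy
  have hy1 : ∀ κ i i', L κ i y = L κ i' y → ∀ x, L κ i x = L κ i' x :=
    fun κ i i' h => (ht κ i i').1 h
  have hy2 : ∀ κ i i', L κ i y < L κ i' y → L κ i xc ≤ L κ i' xc :=
    fun κ i i' h => (ht κ i i').2 h
  -- the region
  set R : Set E := {x | ∀ κ i i', L κ i y < L κ i' y → L κ i x ≤ L κ i' x} with hR
  have hRi : R = ⋂ κ, ⋂ i, ⋂ i', {x | L κ i y < L κ i' y → L κ i x ≤ L κ i' x} := by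
    ext x; simp [hR, Set.mem_iInter]
  -- transfer of the order at y to all of R
  have hT : ∀ x ∈ R, ∀ κ i i', L κ i y ≤ L κ i' y → L κ i x ≤ L κ i' x := by
    intro x hx κ i i' h
    rcases h.lt_or_eq with h' | h'
    · exact hx κ i i' h'
    · exact le_of_eq (hy1 κ i i' h' x)
  -- closedness
  have hclosed : IsClosed R := by
    rw [hRi]
    refine isClosed_iInter fun κ => isClosed_iInter fun i => isClosed_iInter fun i' => ?_
    by_cases hlt : L κ i y < L κ i' y
    · have : {x : E | L κ i y < L κ i' y → L κ i x ≤ L κ i' x}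
          = {x : E | L κ i x ≤ L κ i' x} := by
        ext x; simp [hlt]
      rw [this]
      exact isClosed_le (hcont κ i) (hcont κ i')
    · have : {x : E | L κ i y < L κ i' y → L κ i x ≤ L κ i' x} = Set.univ := by
        ext x; simp [hlt]
      rw [this]; exact isClosed_univ
  -- convexity
  have haff : ∀ κ i (x z : E) (α β : ℝ), α + β = 1 →
      L κ i (α • x + β • z) = α * L κ i x + β * L κ i z := by
    intro κ i x z α β hab
    simp only [hL, inner_add_right, inner_smul_right]
    linear_combination b κ i * hab.symm
  have hconv : Convex ℝ R := by
    intro x hx z hz α β hα hβ hab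
    intro κ i i' hlt
    have h1 := hx κ i i' hlt
    have h2 := hz κ i i' hlt
    rw [haff κ i x z α β hab, haff κ i' x z α β hab]
    have := add_le_add (mul_le_mul_of_nonneg_left h1 hα) (mul_le_mul_of_nonneg_left h2 hβ)
    linarith
  -- xc ∈ R
  have hxcR : xc ∈ R := fun κ i i' h => hy2 κ i i' h
  -- y in the interior
  have hint : (interior R).Nonempty := by
    set U : Set E := ⋂ κ, ⋂ i, ⋂ i', {x | L κ i y < L κ i' y → L κ i x < L κ i' x} with hU
    have hUopen : IsOpen U := by
      refine isOpen_iInter_of_finite fun κ => isOpen_iInter_of_finite fun i =>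
        isOpen_iInter_of_finite fun i' => ?_
      by_cases hlt : L κ i y < L κ i' y
      · have : {x : E | L κ i y < L κ i' y → L κ i x < L κ i' x}
            = {x : E | L κ i x < L κ i' x} := by ext x; simp [hlt]
        rw [this]
        exact isOpen_lt (hcont κ i) (hcont κ i')
      · have : {x : E | L κ i y < L κ i' y → L κ i x < L κ i' x} = Set.univ := by
          ext x; simp [hlt]
        rw [this]; exact isOpen_univ
    have hUR : U ⊆ R := by
      intro x hx κ i i' hlt
      have := Set.mem_iInter.1 (Set.mem_iInter.1 (Set.mem_iInter.1 hx κ) i) i'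
      exact (this hlt).le
    have hyU : y ∈ U := by
      refine Set.mem_iInter.2 fun κ => Set.mem_iInter.2 fun i => Set.mem_iInter.2 fun i' => ?_
      exact fun hlt => hlt
    exact ⟨y, interior_maximal hUR hUopen hyU⟩
  have hconn : IsConnected R := hconv.isConnected ⟨xc, hxcR⟩
  -- selection of indices
  have hκ : ∀ κ, ∃ aκ : Fin N, aκ ∈ Finset.univ.biUnion (s κ) ∧
      ∀ x ∈ R, TLL hM (w κ) (b κ) (s κ) (hs κ) x = L κ aκ x := by
    intro κ
    obtain ⟨j₀, hj₀mem, hj₀⟩ := Finset.exists_mem_eq_sup'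
      (⟨⟨0, hM⟩, Finset.mem_univ _⟩ : (Finset.univ : Finset (Fin M)).Nonempty)
      (fun j => (s κ j).inf' (hs κ j) fun i => L κ i y)
    obtain ⟨i₀, hi₀mem, hi₀⟩ := Finset.exists_mem_eq_inf' (hs κ j₀) (fun i => L κ i y)
    refine ⟨i₀, Finset.mem_biUnion.2 ⟨j₀, Finset.mem_univ _, hi₀mem⟩, ?_⟩
    intro x hx
    have hT' := hT x hx κ
    show Finset.univ.sup' _ (fun j => (s κ j).inf' (hs κ j) fun i => L κ i x) = L κ i₀ x
    apply le_antisymm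
    · apply Finset.sup'_le
      intro j hj
      obtain ⟨i₁, hi₁mem, hi₁⟩ := Finset.exists_mem_eq_inf' (hs κ j) (fun i => L κ i y)
      have step1 : (s κ j).inf' (hs κ j) (fun i => L κ i x) ≤ L κ i₁ x :=
        Finset.inf'_le _ hi₁mem
      have step2 : L κ i₁ y ≤ L κ i₀ y := by
        rw [← hi₁, ← hi₀]
        calc (s κ j).inf' (hs κ j) (fun i => L κ i y)
            ≤ Finset.univ.sup' ⟨⟨0, hM⟩, Finset.mem_univ _⟩
              (fun j => (s κ j).inf' (hs κ j) fun i => L κ i y) :=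
              Finset.le_sup' (f := fun j => (s κ j).inf' (hs κ j) fun i => L κ i y)
                (Finset.mem_univ j)
          _ = (s κ j₀).inf' (hs κ j₀) (fun i => L κ i y) := hj₀
      exact step1.trans (hT' i₁ i₀ step2)
    · have step : L κ i₀ x ≤ (s κ j₀).inf' (hs κ j₀) (fun i => L κ i x) := by
        apply Finset.le_inf'
        intro i hi
        apply hT' i₀ i
        rw [← hi₀]
        exact Finset.inf'_le _ hi
      exact step.trans (Finset.le_sup'
        (f := fun j => (s κ j).inf' (hs κ j) fun i => L κ i x) (Finset.mem_univ j₀))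
  choose a ha1 ha2 using hκ
  exact ⟨a, ha1, R, hclosed, hconn, hint, hxcR, fun κ x hx => ha2 κ x hx⟩
end
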